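/- (Lemma C.7, part 2: pseudoinverse compatibility of the full and augmentation-center covariances.) In the structured contrastive dataset, M† M̃ = M̃† M̃; that is, M† M̃ equals the orthogonal projection onto the column space of M̃. -/
import Mathlib


open Matrix

/-- The contrastive trace loss `Tr(-2 WᵀW P + WᵀW M WᵀW M)`. -/
noncomputable def CLTraceLoss {p D : ℕ} (P M : Matrix (Fin D) (Fin D) ℝ)
    (W : Matrix (Fin p) (Fin D) ℝ) : ℝ :=
  Matrix.trace ((-2 : ℝ) • (Wᵀ * W * P) + Wᵀ * W * M * (Wᵀ * W) * M)

/-- `Ad` is the Moore–Penrose pseudoinverse of `A`. -/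
def IsPseudoinverse {N : ℕ} (A Ad : Matrix (Fin N) (Fin N) ℝ) : Prop :=
  A * Ad * A = A ∧ Ad * A * Ad = Ad ∧ (A * Ad)ᵀ = A * Ad ∧ (Ad * A)ᵀ = Ad * A

lemma pinv_unique {N : ℕ} {A B C : Matrix (Fin N) (Fin N) ℝ}
    (hB : IsPseudoinverse A B) (hC : IsPseudoinverse A C) : B = C := by
  obtain ⟨b1, b2, b3, b4⟩ := hB
  obtain ⟨c1, c2, c3, c4⟩ := hC
  have hAB : A * B = A * C := by
    calc A * B = (A * C * A) * B := by rw [c1]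
    _ = (A * C) * (A * B) := by noncomm_ring
    _ = (A * C)ᵀ * (A * B)ᵀ := by rw [b3, c3]
    _ = Cᵀ * (A * B * A)ᵀ := by simp [Matrix.transpose_mul]; noncomm_ring
    _ = Cᵀ * Aᵀ := by rw [b1]
    _ = (A * C)ᵀ := by rw [Matrix.transpose_mul]
    _ = A * C := c3
  have hBA : B * A = C * A := by
    calc B * A = B * (A * C * A) := by rw [c1]
    _ = (B * A) * (C * A) := by noncomm_ring
    _ = (B * A)ᵀ * (C * A)ᵀ := by rw [b4, c4]
    _ = (A * B * A)ᵀ * Cᵀ := by simp [Matrix.transpose_mul]; noncomm_ring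
    _ = Aᵀ * Cᵀ := by rw [b1]
    _ = (C * A)ᵀ := by rw [Matrix.transpose_mul]
    _ = C * A := c4
  calc B = B * A * B := b2.symm
  _ = (C * A) * B := by rw [hBA]
  _ = C * (A * B) := by rw [Matrix.mul_assoc]
  _ = C * (A * C) := by rw [hAB]
  _ = C * A * C := by rw [Matrix.mul_assoc]
  _ = C := c2

lemma pinv_symm {N : ℕ} {A B : Matrix (Fin N) (Fin N) ℝ}
    (hA : Aᵀ = A) (hB : IsPseudoinverse A B) : Bᵀ = B := by
  obtain ⟨b1, b2, b3, b4⟩ := hB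
  have hBt : IsPseudoinverse A Bᵀ := by
    refine ⟨?_, ?_, ?_, ?_⟩
    · calc A * Bᵀ * A = (Aᵀ * B * Aᵀ)ᵀ := by simp [Matrix.transpose_mul, hA, Matrix.mul_assoc]
      _ = A := by rw [hA, b1, hA]
    · calc Bᵀ * A * Bᵀ = (B * (Aᵀ * B))ᵀ := by
            simp [Matrix.transpose_mul, Matrix.mul_assoc]
      _ = (B * (A * B))ᵀ := by rw [hA]
      _ = (B * A * B)ᵀ := by rw [Matrix.mul_assoc]
      _ = Bᵀ := by rw [b2]
    · calc (A * Bᵀ)ᵀ = B * Aᵀ := by rw [Matrix.transpose_mul]; simp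
      _ = B * A := by rw [hA]
      _ = (B * A)ᵀ := b4.symm
      _ = Aᵀ * Bᵀ := by rw [Matrix.transpose_mul]
      _ = A * Bᵀ := by rw [hA]
    · calc (Bᵀ * A)ᵀ = Aᵀ * B := by rw [Matrix.transpose_mul]; simp
      _ = A * B := by rw [hA]
      _ = (A * B)ᵀ := b3.symm
      _ = Bᵀ * Aᵀ := by rw [Matrix.transpose_mul]
      _ = Bᵀ * A := by rw [hA]
  exact pinv_unique hBt ⟨b1, b2, b3, b4⟩

lemma key_algebra {D : ℕ} (M Mt Md Mtd : Matrix (Fin D) (Fin D) ℝ)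
    (hMs : Mᵀ = M) (hMts : Mtᵀ = Mt)
    (hMd : IsPseudoinverse M Md) (hMtd : IsPseudoinverse Mt Mtd)
    (hkey : M * Mt = Mt * Mt) : Md * Mt = Mtd * Mt := by
  have hMds : Mdᵀ = Md := pinv_symm hMs hMd
  have hMtds : Mtdᵀ = Mtd := pinv_symm hMts hMtd
  obtain ⟨b1, b2, b3, b4⟩ := hMd
  obtain ⟨c1, c2, c3, c4⟩ := hMtd
  have comm1 : Mtd * Mt = Mt * Mtd := by
    calc Mtd * Mt = (Mtd * Mt)ᵀ := c4.symm
    _ = Mtᵀ * Mtdᵀ := Matrix.transpose_mul _ _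
    _ = Mt * Mtd := by rw [hMts, hMtds]
  have comm2 : Md * M = M * Md := by
    calc Md * M = (Md * M)ᵀ := b4.symm
    _ = Mᵀ * Mdᵀ := Matrix.transpose_mul _ _
    _ = M * Md := by rw [hMs, hMds]
  have step2 : M * (Mtd * Mt) = Mt := by
    calc M * (Mtd * Mt) = M * (Mt * Mtd) := by rw [comm1]
    _ = (M * Mt) * Mtd := by rw [Matrix.mul_assoc]
    _ = (Mt * Mt) * Mtd := by rw [hkey]
    _ = Mt * (Mt * Mtd) := by rw [Matrix.mul_assoc]
    _ = Mt * (Mtd * Mt) := by rw [comm1]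
    _ = Mt * Mtd * Mt := by rw [Matrix.mul_assoc]
    _ = Mt := c1
  have step4 : Md * M * M = M := by
    calc Md * M * M = (M * Md) * M := by rw [comm2]
    _ = M := b1
  have step5 : Md * M * Mt = Mt := by
    calc Md * M * Mt = Md * M * (M * (Mtd * Mt)) := by rw [step2]
    _ = (Md * M * M) * (Mtd * Mt) := by noncomm_ring
    _ = M * (Mtd * Mt) := by rw [step4]
    _ = Mt := step2
  calc Md * Mt = Md * (M * (Mtd * Mt)) := by rw [step2]
  _ = Md * (M * (Mt * Mtd)) := by rw [comm1]
  _ = (Md * M * Mt) * Mtd := by noncomm_ring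
  _ = Mt * Mtd := by rw [step5]
  _ = Mtd * Mt := comm1.symm

lemma vmv_transpose {D : ℕ} (a b : Fin D → ℝ) : (vecMulVec a b)ᵀ = vecMulVec b a := by
  ext s t; simp [Matrix.vecMulVec_apply, Matrix.transpose_apply, mul_comm]

lemma vmv_mulVec {D : ℕ} (a b w : Fin D → ℝ) :
    (vecMulVec a b) *ᵥ w = (∑ t, b t * w t) • a := by
  ext s
  simp only [Matrix.mulVec, dotProduct, Matrix.vecMulVec_apply, Pi.smul_apply, smul_eq_mul]
  rw [Finset.sum_mul]
  exact Finset.sum_congr rfl fun u _ => by ring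

lemma mul_vmv {D : ℕ} (A : Matrix (Fin D) (Fin D) ℝ) (a b : Fin D → ℝ) :
    A * vecMulVec a b = vecMulVec (A *ᵥ a) b := by
  ext s t
  simp only [Matrix.mul_apply, Matrix.vecMulVec_apply, Matrix.mulVec, dotProduct,
    Finset.sum_mul]
  exact Finset.sum_congr rfl fun u _ => by ring

lemma sum_mulVec' {ι : Type*} {D : ℕ} (s : Finset ι) (A : ι → Matrix (Fin D) (Fin D) ℝ)
    (w : Fin D → ℝ) : (∑ i ∈ s, A i) *ᵥ w = ∑ i ∈ s, (A i) *ᵥ w := by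
  ext t
  simp only [Matrix.mulVec, dotProduct, Finset.sum_apply, Matrix.sum_apply, Finset.sum_mul]
  exact Finset.sum_comm
theorem stmt_15
    (m K n D : ℕ)
    (hm : 1 ≤ m) (hK : 3 ≤ K) (hn : 1 ≤ n) (hdiv : 8 * (K - 2) ∣ n)
    (hD : K + 1 + m * n ≤ D)
    (φ : ℕ → ℝ) (hφ : ∀ j, 1 ≤ j → j ≤ K → 0 < φ j)
    (μ σξ : ℝ) (hσ : 0 < σξ)
    (v : ℕ → Fin D → ℝ)
    (hortho : ∀ i j, i ≤ K + m * n → j ≤ K + m * n →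
      (∑ t, v i t * v j t) = if i = j then (1 : ℝ) else 0)
    (y ysub ρ : Fin (m * n) → ℝ) (κ : Fin (m * n) → ℕ)
    (hy : ∀ i, y i = 1 ∨ y i = -1)
    (hysub : ∀ i, ysub i = 1 ∨ ysub i = -1)
    (hρ : ∀ i, ρ i = 1 ∨ ρ i = -1)
    (hκ : ∀ i, 3 ≤ κ i ∧ κ i ≤ K)
    (hblock : ∀ i j : Fin (m * n), i.1 / m = j.1 / m →
      y i = y j ∧ ysub i = ysub j ∧ κ i = κ j ∧ ρ i = ρ j)
    (hbal : ∀ (a b r : ℝ) (c : ℕ), (a = 1 ∨ a = -1) → (b = 1 ∨ b = -1) →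
      (r = 1 ∨ r = -1) → 3 ≤ c → c ≤ K →
      Set.ncard {i : Fin (m * n) | y i = a ∧ ysub i = b ∧ κ i = c ∧ ρ i = r}
        = m * n / (8 * (K - 2)))
    (x : Fin (m * n) → Fin D → ℝ)
    (hx : ∀ i, x i = fun t => v 0 t + y i * φ 1 * v 1 t + (ysub i * φ 2 + μ) * v 2 t
      + ρ i * φ (κ i) * v (κ i) t + σξ * v (K + 1 + i.1) t)
    (M Mp : Matrix (Fin D) (Fin D) ℝ)
    (hM : M = ((m * n : ℝ))⁻¹ • ∑ i, Matrix.vecMulVec (x i) (x i))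
    (xbar : ℝ → Fin D → ℝ)
    (hxbar : ∀ ε, xbar ε = (2 / (m * n : ℝ)) •
      ∑ i, Set.indicator {j : Fin (m * n) | y j = ε} x i)
    (hMp : Mp = (2 : ℝ)⁻¹ • (Matrix.vecMulVec (xbar 1) (xbar 1)
      + Matrix.vecMulVec (xbar (-1)) (xbar (-1))))
    (xtil : Fin n → Fin D → ℝ)
    (hxtil : ∀ l : Fin n, xtil l = (m : ℝ)⁻¹ •
      ∑ i, Set.indicator {j : Fin (m * n) | j.1 / m = l.1} x i)
    (Mt : Matrix (Fin D) (Fin D) ℝ)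
    (hMt : Mt = (n : ℝ)⁻¹ • ∑ l, Matrix.vecMulVec (xtil l) (xtil l))
    (Md : Matrix (Fin D) (Fin D) ℝ) (hMd : IsPseudoinverse M Md)
    (Mtd : Matrix (Fin D) (Fin D) ℝ) (hMtd : IsPseudoinverse Mt Mtd) :
    Md * Mt = Mtd * Mt := by
  have hm0 : 0 < m := hm
  have hmR : (m : ℝ) ≠ 0 := by positivity
  -- `x` evaluated pointwise
  have hxt : ∀ (i : Fin (m * n)) (t : Fin D), x i t = v 0 t + y i * φ 1 * v 1 t
      + (ysub i * φ 2 + μ) * v 2 t + ρ i * φ (κ i) * v (κ i) t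
      + σξ * v (K + 1 + i.1) t := fun i t => by rw [hx i]
  -- dot products with single basis vectors
  have hds : ∀ (c : ℝ) (e k : ℕ), e ≤ K + m * n → k ≤ K + m * n →
      (∑ t, v e t * (c * v k t)) = if e = k then c else 0 := by
    intro c e k he hk
    have h1 : (∑ t, v e t * (c * v k t)) = c * ∑ t, v e t * v k t := by
      rw [Finset.mul_sum]
      exact Finset.sum_congr rfl fun t _ => by ring
    rw [h1, hortho e k he hk]
    split <;> simp
  -- dot product of a noise vector with a data point
  have hdotv : ∀ (i j : Fin (m * n)),
      (∑ t, v (K + 1 + i.1) t * x j t) = if i = j then σξ else 0 := by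
    intro i j
    have hi := i.2; have hj := j.2
    have hκj := hκ j
    have expand : ∀ t : Fin D, v (K + 1 + i.1) t * x j t
        = v (K + 1 + i.1) t * ((1 : ℝ) * v 0 t)
        + v (K + 1 + i.1) t * (y j * φ 1 * v 1 t)
        + v (K + 1 + i.1) t * ((ysub j * φ 2 + μ) * v 2 t)
        + v (K + 1 + i.1) t * (ρ j * φ (κ j) * v (κ j) t)
        + v (K + 1 + i.1) t * (σξ * v (K + 1 + j.1) t) := by
      intro t; rw [hxt j t]; ring
    calc (∑ t, v (K + 1 + i.1) t * x j t)
        = (∑ t, v (K + 1 + i.1) t * ((1 : ℝ) * v 0 t))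
        + (∑ t, v (K + 1 + i.1) t * (y j * φ 1 * v 1 t))
        + (∑ t, v (K + 1 + i.1) t * ((ysub j * φ 2 + μ) * v 2 t))
        + (∑ t, v (K + 1 + i.1) t * (ρ j * φ (κ j) * v (κ j) t))
        + (∑ t, v (K + 1 + i.1) t * (σξ * v (K + 1 + j.1) t)) := by
          simp only [expand, Finset.sum_add_distrib]
    _ = if i = j then σξ else 0 := by
      rw [hds 1 _ 0 (by omega) (by omega), hds (y j * φ 1) _ 1 (by omega) (by omega),
        hds (ysub j * φ 2 + μ) _ 2 (by omega) (by omega),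
        hds (ρ j * φ (κ j)) _ (κ j) (by omega) (by omega),
        hds σξ _ (K + 1 + j.1) (by omega) (by omega)]
      rw [if_neg (by omega), if_neg (by omega), if_neg (by omega), if_neg (by omega)]
      simp only [add_zero, zero_add]
      by_cases h : i = j
      · subst h; simp
      · rw [if_neg (fun hc => h (Fin.ext (by omega))), if_neg h]
  -- same-block difference of data points
  have hbdiff : ∀ i i' : Fin (m * n), i.1 / m = i'.1 / m → ∀ t,
      x i t = x i' t + σξ * v (K + 1 + i.1) t - σξ * v (K + 1 + i'.1) t := by
    intro i i' h t
    obtain ⟨h1, h2, h3, h4⟩ := hblock i i' h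
    rw [hxt i t, hxt i' t, h1, h2, h3, h4]; ring
  -- pointwise formula for xtil
  have hxtilt : ∀ (l : Fin n) (t : Fin D), xtil l t
      = (m : ℝ)⁻¹ * ∑ j : Fin (m * n), (if j.1 / m = l.1 then x j t else 0) := by
    intro l t
    rw [hxtil l]
    simp [Set.indicator_apply, Finset.sum_apply, Set.mem_setOf_eq, ite_apply]
  -- dot product of a noise vector with xtil
  have hnoisetil : ∀ (i : Fin (m * n)) (l : Fin n),
      (∑ t, v (K + 1 + i.1) t * xtil l t)
        = if i.1 / m = l.1 then σξ * (m : ℝ)⁻¹ else 0 := by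
    intro i l
    have h1 : (∑ t, v (K + 1 + i.1) t * xtil l t)
        = (m : ℝ)⁻¹ * ∑ j : Fin (m * n),
            (if j.1 / m = l.1 then (∑ t, v (K + 1 + i.1) t * x j t) else 0) := by
      calc (∑ t, v (K + 1 + i.1) t * xtil l t)
          = ∑ t, (m : ℝ)⁻¹ * ∑ j : Fin (m * n),
              (if j.1 / m = l.1 then v (K + 1 + i.1) t * x j t else 0) := by
            refine Finset.sum_congr rfl fun t _ => ?_
            rw [hxtilt l t]
            simp only [Finset.mul_sum]
            refine Finset.sum_congr rfl fun j _ => ?_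
            by_cases h : j.1 / m = l.1 <;> simp [h] <;> ring
      _ = (m : ℝ)⁻¹ * ∑ j : Fin (m * n),
            (if j.1 / m = l.1 then (∑ t, v (K + 1 + i.1) t * x j t) else 0) := by
            rw [← Finset.mul_sum, Finset.sum_comm]
            refine congrArg _ (Finset.sum_congr rfl fun j _ => ?_)
            by_cases h : j.1 / m = l.1 <;> simp [h]
    rw [h1]
    have h2 : ∀ j : Fin (m * n),
        (if j.1 / m = l.1 then (∑ t, v (K + 1 + i.1) t * x j t) else 0)
          = if i = j then (if i.1 / m = l.1 then σξ else 0) else 0 := by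
      intro j
      rw [hdotv i j]
      by_cases h : i = j
      · subst h; by_cases h' : i.1 / m = l.1 <;> simp [h']
      · by_cases h' : j.1 / m = l.1 <;> simp [h, h']
    simp only [h2, Finset.sum_ite_eq, Finset.mem_univ, if_true]
    by_cases h : i.1 / m = l.1 <;> simp [h] <;> ring
  -- the dot product (x i) ⬝ (xtil l) only depends on the block of i
  have hdconst : ∀ (i i' : Fin (m * n)) (l : Fin n), i.1 / m = i'.1 / m →
      (∑ t, x i t * xtil l t) = (∑ t, x i' t * xtil l t) := by
    intro i i' l h
    have h1 : ∀ t, x i t * xtil l t = x i' t * xtil l t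
        + σξ * (v (K + 1 + i.1) t * xtil l t) - σξ * (v (K + 1 + i'.1) t * xtil l t) := by
      intro t; rw [hbdiff i i' h t]; ring
    simp only [h1]
    rw [Finset.sum_sub_distrib, Finset.sum_add_distrib, ← Finset.mul_sum, ← Finset.mul_sum,
      hnoisetil, hnoisetil, h]
    ring
  -- cardinality of each block
  have hcard : ∀ l : Fin n,
      (Finset.univ.filter (fun j : Fin (m * n) => j.1 / m = l.1)).card = m := by
    intro l
    have hl := l.2
    have hbound : ∀ r : Fin m, m * l.1 + r.1 < m * n := by
      intro r
      have hr := r.2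
      have h1 : m * (l.1 + 1) = m * l.1 + m := by ring
      have h2 : m * (l.1 + 1) ≤ m * n := Nat.mul_le_mul_left m (by omega)
      omega
    have himg : (Finset.univ.filter (fun j : Fin (m * n) => j.1 / m = l.1))
        = Finset.image (fun r : Fin m => (⟨m * l.1 + r.1, hbound r⟩ : Fin (m * n)))
            Finset.univ := by
      ext j
      simp only [Finset.mem_filter, Finset.mem_univ, true_and, Finset.mem_image]
      constructor
      · intro hj
        have hmod := Nat.div_add_mod j.1 m
        have hmlt : j.1 % m < m := Nat.mod_lt _ hm0
        refine ⟨⟨j.1 % m, hmlt⟩, ?_⟩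
        rw [hj] at hmod
        exact Fin.ext hmod
      · rintro ⟨r, rfl⟩
        simp only
        rw [Nat.mul_add_div hm0, Nat.div_eq_of_lt r.2, add_zero]
    rw [himg, Finset.card_image_of_injective _ ?_, Finset.card_univ, Fintype.card_fin]
    intro r r' hrr
    have : m * l.1 + r.1 = m * l.1 + r'.1 := congrArg Fin.val hrr
    exact Fin.ext (by omega)
  -- sum of x over a block
  have hsumx : ∀ (l : Fin n) (t : Fin D),
      (∑ j : Fin (m * n), if j.1 / m = l.1 then x j t else 0) = (m : ℝ) * xtil l t := by
    intro l t
    rw [hxtilt l t, ← mul_assoc, mul_inv_cancel₀ hmR, one_mul]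
  -- the block-average dot product
  have hd_til : ∀ (i : Fin (m * n)) (l' l : Fin n), i.1 / m = l'.1 →
      (∑ t, xtil l' t * xtil l t) = ∑ t, x i t * xtil l t := by
    intro i l' l hi
    calc (∑ t, xtil l' t * xtil l t)
        = ∑ t, (m : ℝ)⁻¹ * ∑ j : Fin (m * n),
            (if j.1 / m = l'.1 then x j t * xtil l t else 0) := by
          refine Finset.sum_congr rfl fun t _ => ?_
          rw [hxtilt l' t]
          simp only [Finset.mul_sum, Finset.sum_mul]
          refine Finset.sum_congr rfl fun j _ => ?_
          by_cases h : j.1 / m = l'.1 <;> simp [h] <;> ring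
    _ = (m : ℝ)⁻¹ * ∑ j : Fin (m * n),
          (if j.1 / m = l'.1 then (∑ t, x j t * xtil l t) else 0) := by
          rw [← Finset.mul_sum, Finset.sum_comm]
          refine congrArg _ (Finset.sum_congr rfl fun j _ => ?_)
          by_cases h : j.1 / m = l'.1 <;> simp [h]
    _ = (m : ℝ)⁻¹ * ∑ j : Fin (m * n),
          (if j.1 / m = l'.1 then (∑ t, x i t * xtil l t) else 0) := by
          refine congrArg _ (Finset.sum_congr rfl fun j _ => ?_)
          by_cases h : j.1 / m = l'.1
          · rw [if_pos h, if_pos h, hdconst j i l (by rw [h, hi])]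
          · rw [if_neg h, if_neg h]
    _ = (m : ℝ)⁻¹ * ((m : ℝ) * ∑ t, x i t * xtil l t) := by
          rw [← Finset.sum_filter, Finset.sum_const, hcard l', nsmul_eq_mul]
    _ = ∑ t, x i t * xtil l t := by
          rw [← mul_assoc, inv_mul_cancel₀ hmR, one_mul]
  -- the key vector identity: M and Mt agree on each xtil
  have hvec : ∀ l : Fin n, M *ᵥ xtil l = Mt *ᵥ xtil l := by
    intro l
    rw [hM, hMt, Matrix.smul_mulVec, Matrix.smul_mulVec,
      sum_mulVec', sum_mulVec']
    simp only [vmv_mulVec]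
    have hpart : (∑ i : Fin (m * n), (∑ t, x i t * xtil l t) • x i)
        = ∑ l' : Fin n, ∑ i : Fin (m * n),
            (if i.1 / m = l'.1 then (∑ t, x i t * xtil l t) • x i else 0) := by
      rw [Finset.sum_comm]
      refine Finset.sum_congr rfl fun i _ => ?_
      have hblt : i.1 / m < n := (Nat.div_lt_iff_lt_mul hm0).mpr
        (lt_of_lt_of_eq i.2 (Nat.mul_comm m n))
      rw [Finset.sum_eq_single (⟨i.1 / m, hblt⟩ : Fin n)]
      · rw [if_pos rfl]
      · intro b _ hb
        exact if_neg (fun hc => hb (Fin.ext hc.symm))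
      · intro h; exact absurd (Finset.mem_univ _) h
    have hblocksum : ∀ l' : Fin n,
        (∑ i : Fin (m * n), (if i.1 / m = l'.1 then (∑ t, x i t * xtil l t) • x i else 0))
          = ((m : ℝ) * ∑ t, xtil l' t * xtil l t) • xtil l' := by
      intro l'
      have step : ∀ i : Fin (m * n),
          (if i.1 / m = l'.1 then (∑ t, x i t * xtil l t) • x i else 0)
            = (∑ t, xtil l' t * xtil l t) • (if i.1 / m = l'.1 then x i else 0) := by
        intro i
        by_cases h : i.1 / m = l'.1
        · rw [if_pos h, if_pos h, hd_til i l' l h]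
        · rw [if_neg h, if_neg h, smul_zero]
      simp only [step]
      rw [← Finset.smul_sum]
      have hsx : (∑ i : Fin (m * n), (if i.1 / m = l'.1 then x i else (0 : Fin D → ℝ)))
          = (m : ℝ) • xtil l' := by
        funext t
        rw [Finset.sum_apply]
        simp only [ite_apply, Pi.zero_apply]
        rw [hsumx l' t]
        simp
      rw [hsx, smul_smul, mul_comm]
    simp only [hpart, hblocksum]
    rw [Finset.smul_sum, Finset.smul_sum]
    refine Finset.sum_congr rfl fun l' _ => ?_
    rw [smul_smul, smul_smul]
    congr 1
    have hnR : (n : ℝ) ≠ 0 := by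
      have : 0 < n := hn
      positivity
    push_cast
    field_simp
  -- symmetry of M and Mt
  have hMsym : Mᵀ = M := by
    rw [hM, Matrix.transpose_smul, Matrix.transpose_sum]
    simp only [vmv_transpose]
  have hMtsym : Mtᵀ = Mt := by
    rw [hMt, Matrix.transpose_smul, Matrix.transpose_sum]
    simp only [vmv_transpose]
  -- the key matrix identity
  have hexp : ∀ A : Matrix (Fin D) (Fin D) ℝ,
      A * Mt = (n : ℝ)⁻¹ • ∑ l, Matrix.vecMulVec (A *ᵥ xtil l) (xtil l) := by
    intro A
    conv_lhs => rw [hMt]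
    rw [Matrix.mul_smul, Finset.mul_sum]
    congr 1
    exact Finset.sum_congr rfl fun l _ => mul_vmv A (xtil l) (xtil l)
  have hkey : M * Mt = Mt * Mt := by
    rw [hexp M, hexp Mt]
    congr 1
    exact Finset.sum_congr rfl fun l _ => by rw [hvec l]
  exact key_algebra M Mt Md Mtd hMsym hMtsym hMd hMtd hkey
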